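/- arXiv:2404.08874 — 8 statements merged into one kernel-verified Lean document; each statement's English description precedes it below -/
import Mathlib

section
/- Let (X,𝒱) and (Y,𝒲) be semi-coarse spaces, and suppose X₁,…,Xₙ ⊆ X, endowed with the subspace structures 𝒱ᵢ, satisfy ∪ᵢ₌₁ⁿ Xᵢ = X and that every V ∈ 𝒱 may be written as V = ∪ᵢ₌₁ⁿ Vᵢ with each Vᵢ ∈ 𝒱ᵢ. If f : X → Y is a map such that each restriction f|_{Xᵢ} : (Xᵢ,𝒱ᵢ) → (Y,𝒲) is bornologous, then f : (X,𝒱) → (Y,𝒲) is bornologous. -/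
open Set

universe u v w

/-- A semi-coarse structure on a set `X`: a collection of subsets of `X × X` containing the
diagonal, closed under subsets, finite unions, and inverses. -/
def IsSemiCoarseStructure {X : Type u} (V : Set (Set (X × X))) : Prop :=
  Set.diagonal X ∈ V ∧
  (∀ A B : Set (X × X), B ∈ V → A ⊆ B → A ∈ V) ∧
  (∀ A B : Set (X × X), A ∈ V → B ∈ V → A ∪ B ∈ V) ∧
  (∀ A : Set (X × X), A ∈ V → Prod.swap '' A ∈ V)

/-- A map `f : (X,𝒱) → (Y,𝒲)` is bornologous if `(f × f)(V) ∈ 𝒲` for every `V ∈ 𝒱`. -/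
def Bornologous {X : Type u} {Y : Type v} (V : Set (Set (X × X))) (W : Set (Set (Y × Y)))
    (f : X → Y) : Prop :=
  ∀ A ∈ V, (fun p : X × X => (f p.1, f p.2)) '' A ∈ W

/-- `ℤ₁`: the semi-coarse structure on `ℤ` whose controlled sets are exactly the subsets of
`{(i, i+j) : i ∈ ℤ, j ∈ {-1,0,1}}`. -/
def Z1 : Set (Set (ℤ × ℤ)) :=
  {A | A ⊆ {p : ℤ × ℤ | |p.2 - p.1| ≤ 1}}

/-- The subspace semi-coarse structure on a subset `s ⊆ X`, viewed on the subtype `s`: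
a set is controlled iff its image in `X × X` is controlled. -/
def subStruct {X : Type u} (V : Set (Set (X × X))) (s : Set X) : Set (Set (s × s)) :=
  {A | (fun p : s × s => ((p.1 : X), (p.2 : X))) '' A ∈ V}

/-- The subspace semi-coarse structure `𝒱_s := {V ∩ (s × s) : V ∈ 𝒱}`, viewed inside `X × X`. -/
def subFamily {X : Type u} (V : Set (Set (X × X))) (s : Set X) : Set (Set (X × X)) :=
  {W | ∃ V' ∈ V, W = V' ∩ (s ×ˢ s)}

/-- The product semi-coarse structure: `U` is controlled iff `U ⊆ A ⊠ B` for controlled `A, B`. -/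
def prodStruct {X : Type u} {Y : Type v} (V : Set (Set (X × X))) (W : Set (Set (Y × Y))) :
    Set (Set ((X × Y) × (X × Y))) :=
  {U | ∃ A ∈ V, ∃ B ∈ W,
    U ⊆ {p : (X × Y) × (X × Y) | (p.1.1, p.2.1) ∈ A ∧ (p.1.2, p.2.2) ∈ B}}

/-- The quotient semi-coarse structure inductively generated by `q`:
`𝒱_q := {(q × q)(V) : V ∈ 𝒱}`. -/
def quotStruct {X : Type u} {Y : Type v} (V : Set (Set (X × X))) (q : X → Y) :
    Set (Set (Y × Y)) :=
  {W | ∃ V' ∈ V, W = (fun p : X × X => (q p.1, q p.2)) '' V'}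

/-- The disjoint-union semi-coarse structure on `Σ l, Xl l`: controlled sets are the finite
disjoint unions of controlled sets of the summands. -/
def djStruct {Λ : Type u} {Xl : Λ → Type v} (Vl : ∀ l : Λ, Set (Set (Xl l × Xl l))) :
    Set (Set ((Σ l : Λ, Xl l) × (Σ l : Λ, Xl l))) :=
  {U | ∃ s : Finset Λ, ∃ C : ∀ l : Λ, Set (Xl l × Xl l),
        (∀ l : Λ, C l ∈ Vl l) ∧
        U = ⋃ l ∈ s, (fun p : Xl l × Xl l =>
              ((⟨l, p.1⟩ : Σ l : Λ, Xl l), (⟨l, p.2⟩ : Σ l : Λ, Xl l))) '' C l}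

/-- The disjoint-union semi-coarse structure on `A ⊕ B`. -/
def djStruct2 {A : Type u} {B : Type u} (VA : Set (Set (A × A))) (VB : Set (Set (B × B))) :
    Set (Set ((A ⊕ B) × (A ⊕ B))) :=
  {U | ∃ CA ∈ VA, ∃ CB ∈ VB,
    U = (fun p : A × A => ((Sum.inl p.1 : A ⊕ B), (Sum.inl p.2 : A ⊕ B))) '' CA ∪
        (fun p : B × B => ((Sum.inr p.1 : A ⊕ B), (Sum.inr p.2 : A ⊕ B))) '' CB}

/-- The relation on `A ⊕ B` identifying `inl (f c)` with `inr (g c)`. -/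
def pushRel {A : Type u} {B : Type u} {C : Type u} (f : C → A) (g : C → B) :
    (A ⊕ B) → (A ⊕ B) → Prop :=
  fun x y => ∃ c : C, x = Sum.inl (f c) ∧ y = Sum.inr (g c)

/-- The semi-coarse structure `𝒱_{A ⊔_{A∩B} B}` of the pushout of the inclusions
`A∩B → A` and `A∩B → B`, with underlying set identified inside `X`: the controlled sets are
exactly the unions `V₁ ∪ V₂` with `V₁, V₂` controlled, `V₁ ⊆ A × A`, `V₂ ⊆ B × B`. -/
def pushoutStruct {X : Type u} (V : Set (Set (X × X))) (A B : Set X) : Set (Set (X × X)) :=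
  {W | ∃ V₁ ∈ V, ∃ V₂ ∈ V, V₁ ⊆ A ×ˢ A ∧ V₂ ⊆ B ×ˢ B ∧ W = V₁ ∪ V₂}

/-- `x` and `y` are joined by a bornologous path `γ : {0,…,n} → Y` (with `{0,…,n} ⊆ ℤ₁`). -/
def SCReachable {Y : Type u} (W : Set (Set (Y × Y))) (x y : Y) : Prop :=
  ∃ n : ℕ, ∃ γ : (Set.Icc (0:ℤ) (n:ℤ)) → Y,
    Bornologous (subStruct Z1 (Set.Icc (0:ℤ) (n:ℤ))) W γ ∧
    γ ⟨0, Set.mem_Icc.mpr ⟨le_rfl, Int.natCast_nonneg n⟩⟩ = x ∧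
    γ ⟨(n:ℤ), Set.mem_Icc.mpr ⟨Int.natCast_nonneg n, le_rfl⟩⟩ = y

/-- A semi-coarse space is connected if any two points are joined by a bornologous path. -/
def SCConnected {Y : Type u} (W : Set (Set (Y × Y))) : Prop :=
  ∀ x y : Y, SCReachable W x y

/-- The three-point interval `{0,1,2} ⊆ ℤ`. -/
def I2 : Set ℤ := Set.Icc 0 2

def i2p0 : I2 := ⟨0, Set.mem_Icc.mpr (by norm_num)⟩
def i2p1 : I2 := ⟨1, Set.mem_Icc.mpr (by norm_num)⟩
def i2p2 : I2 := ⟨2, Set.mem_Icc.mpr (by norm_num)⟩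

/-- A bornologous path `{0,1,2} → X` with respect to a structure `P` on `X`. -/
def ShortPathIn {X : Type u} (P : Set (Set (X × X))) (γ : I2 → X) : Prop :=
  Bornologous (subStruct Z1 I2) P γ

/-- `A, B` well-split `X`. -/
def WellSplit {X : Type u} (V : Set (Set (X × X))) (A B : Set X) : Prop :=
  A.Nonempty ∧ B.Nonempty ∧ A ∪ B = Set.univ ∧
  ∀ x y y' : X,
    ({(x, y), (x, y')} : Set (X × X)) ∈ V →
    ({(x, y), (x, y')} : Set (X × X)) ∉ pushoutStruct V A B →
    ({(y, y')} : Set (X × X)) ∈ pushoutStruct V A B →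
    ((∃ γ γ' : I2 → X,
        ShortPathIn (pushoutStruct V A B) γ ∧ ShortPathIn (pushoutStruct V A B) γ' ∧
        γ i2p0 = x ∧ γ' i2p0 = x ∧ γ i2p2 = y ∧ γ' i2p2 = y' ∧ γ i2p1 = γ' i2p1) ∧
      SCConnected (subStruct V {m : X | ∃ γ : I2 → X,
        ShortPathIn (pushoutStruct V A B) γ ∧ γ i2p0 = x ∧ γ i2p2 = y ∧ γ i2p1 = m}))

/-- Semi-coarse homotopy of two maps `f g : (X,𝒱) → (Y,𝒲)`. -/
def SCHomotopic {X : Type u} {Y : Type v} (V : Set (Set (X × X))) (W : Set (Set (Y × Y)))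
    (f g : X → Y) : Prop :=
  ∃ H : X × ℤ → Y, Bornologous (prodStruct V Z1) W H ∧
    (∃ M : ℤ, ∀ x : X, ∀ k : ℤ, k ≤ M → H (x, k) = f x) ∧
    (∃ N : ℤ, ∀ x : X, ∀ k : ℤ, N ≤ k → H (x, k) = g x)

/-- A symmetric map `ℤ → X`. -/
def SymMap {X : Type u} (f : ℤ → X) : Prop := ∀ z : ℤ, f z = f (-z)

/-- The opposite direction of `f : ℤ₁ → X`. -/
def opp {X : Type u} (f : ℤ → X) : ℤ → X := fun z => f (-z)

/-- The nonnegative ray `[0,∞) ⊆ ℤ`. -/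
def NonnegAxis : Set ℤ := {z : ℤ | 0 ≤ z}

/-- The linking condition on consecutive members of a string: there are shifts `N, M` such that
`z ↦ f (z + N)` restricted to `[0,∞)` is semi-coarse homotopic to the opposite of
`z ↦ g (z + M)` restricted to `[0,∞)`. -/
def tailsLink {X : Type u} (V : Set (Set (X × X))) (f g : ℤ → X) : Prop :=
  ∃ N M : ℤ, SCHomotopic (subStruct Z1 NonnegAxis) V
    (fun z : NonnegAxis => f ((z : ℤ) + N)) (fun z : NonnegAxis => g (-(z : ℤ) + M))

/-- `L` is a string in `X` from `⟨f⟩_∞` to `⟨g⟩_∞`. -/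
def IsString {X : Type u} (V : Set (Set (X × X))) (f g : ℤ → X) (L : List (ℤ → X)) : Prop :=
  L ≠ [] ∧ SymMap f ∧ SymMap g ∧ Bornologous Z1 V f ∧ Bornologous Z1 V g ∧
  (∀ u ∈ L, Bornologous Z1 V u) ∧ List.Chain' (tailsLink V) (f :: L ++ [g])

/-- Two maps `ℤ → X` are eventually equal. -/
def EventuallyEqual {X : Type u} (f g : ℤ → X) : Prop :=
  ∃ N M : ℕ, ∀ k : ℕ, f ((N : ℤ) + (k : ℤ)) = g ((M : ℤ) + (k : ℤ))

/-- The generating relation for the class `⟨f⟩_∞`: symmetric bornologous maps which are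
eventually equal or semi-coarse homotopic. -/
def InfRel {X : Type u} (V : Set (Set (X × X))) (f g : ℤ → X) : Prop :=
  SymMap f ∧ SymMap g ∧ Bornologous Z1 V f ∧ Bornologous Z1 V g ∧
  (EventuallyEqual f g ∨ SCHomotopic Z1 V f g)

/-- `g ∈ ⟨f⟩_∞`: the equivalence generated by eventual equality and semi-coarse homotopy of
symmetric maps. -/
def InfEqv {X : Type u} (V : Set (Set (X × X))) (f g : ℤ → X) : Prop :=
  Relation.ReflTransGen (fun a b => InfRel V a b ∨ InfRel V b a) f g

/-- `g` is periodic on the subset `s ⊆ ℤ`. -/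
def PeriodicOn {X : Type u} (g : ℤ → X) (s : Set ℤ) : Prop :=
  ∃ p : ℤ, 0 < p ∧ ∀ z ∈ s, g (z + p) = g z

/-- The restriction of `g` to `s` is semi-coarse homotopic to a constant map. -/
def HomotopicToConstOn {X : Type u} (V : Set (Set (X × X))) (g : ℤ → X) (s : Set ℤ) : Prop :=
  ∃ c : X, SCHomotopic (subStruct Z1 s) V (fun z : s => g (z : ℤ)) (fun _ : s => c)

/-- The periodicity-of-tails condition at the point `j`. -/
def TailCondAt {X : Type u} (V : Set (Set (X × X))) (g : ℤ → X) (j : ℤ) : Prop :=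
  ((PeriodicOn g {z : ℤ | j - 1 ≤ z} ∧ ∃ k : ℤ, 1 < k ∧ PeriodicOn g {z : ℤ | j - k ≤ z}) →
      HomotopicToConstOn V g {z : ℤ | j ≤ z}) ∧
  ((PeriodicOn g {z : ℤ | z ≤ j + 1} ∧ ∃ k : ℤ, 1 < k ∧ PeriodicOn g {z : ℤ | z ≤ j + k}) →
      HomotopicToConstOn V g {z : ℤ | z ≤ j})

/-- The periodicity-of-tails condition (at every point). -/
def TailCond {X : Type u} (V : Set (Set (X × X))) (g : ℤ → X) : Prop :=
  ∀ j : ℤ, TailCondAt V g j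

/-- `F →_{d_op(i)} F'`: delete two consecutive opposite maps. -/
def DelOp {X : Type u} (F F' : List (ℤ → X)) : Prop :=
  ∃ (P S : List (ℤ → X)) (u v : ℤ → X) (N : ℤ),
    F = P ++ u :: v :: S ∧ F' = P ++ S ∧ 3 ≤ F.length ∧
    ∀ z : ℤ, u z = v (-(z + N))

/-- `F →_{m(i,j)} F'`: merge two consecutive maps with equal constant adjacent tails. -/
def MergeRel {X : Type u} (V : Set (Set (X × X))) (F F' : List (ℤ → X)) : Prop :=
  ∃ (P S : List (ℤ → X)) (u v g : ℤ → X) (x₀ : X) (N M j : ℤ),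
    F = P ++ u :: v :: S ∧ F' = P ++ g :: S ∧
    N ≤ j ∧ j ≤ M ∧
    (∀ x : ℤ, N ≤ x → u x = x₀) ∧ (∀ y : ℤ, y ≤ M → v y = x₀) ∧
    (∀ x : ℤ, g x = if x ≤ j then u x else v x) ∧
    TailCondAt V g j

/-- One step of the relation generating `≃_S`, in either direction. -/
def StepS {X : Type u} (V : Set (Set (X × X))) (F F' : List (ℤ → X)) : Prop :=
  DelOp F F' ∨ DelOp F' F ∨ MergeRel V F F' ∨ MergeRel V F' F

/-- The relation `≃_S` on strings. -/
def SimS {X : Type u} (V : Set (Set (X × X))) : List (ℤ → X) → List (ℤ → X) → Prop :=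
  Relation.ReflTransGen (StepS V)

/-- The opposite direction `F̄` of a string `F`. -/
def oppStr {X : Type u} (F : List (ℤ → X)) : List (ℤ → X) := (F.map opp).reverse

/-- `f →_{d(z₀)} g`: `g` is the result of deleting `z₀` in `f`. -/
def DeleteRel {X : Type u} (V : Set (Set (X × X))) (z₀ : ℤ) (f g : ℤ → X) : Prop :=
  Bornologous Z1 V f ∧ Bornologous Z1 V g ∧
  (∀ z : ℤ, z < z₀ → g z = f z) ∧ (∀ z : ℤ, z₀ ≤ z → g z = f (z + 1)) ∧
  TailCond V g

/-- `f →_{a(z₀,x₀)} g`: `g` is the result of adding `x₀` at `z₀` in `f`. -/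
def AddRel {X : Type u} (V : Set (Set (X × X))) (z₀ : ℤ) (x₀ : X) (f g : ℤ → X) : Prop :=
  Bornologous Z1 V f ∧ Bornologous Z1 V g ∧
  (∀ z : ℤ, z < z₀ → g z = f z) ∧ g z₀ = x₀ ∧ (∀ z : ℤ, z₀ < z → g z = f (z - 1)) ∧
  TailCond V f

/-- One step of the relation generating `≃_d`. -/
def StepD {X : Type u} (V : Set (Set (X × X))) (f g : ℤ → X) : Prop :=
  (∃ z₀ : ℤ, DeleteRel V z₀ f g) ∨ (∃ z₀ : ℤ, ∃ x₀ : X, AddRel V z₀ x₀ f g)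

/-- The relation `≃_d` on bornologous maps `ℤ₁ → X`. -/
def SimD {X : Type u} (V : Set (Set (X × X))) : (ℤ → X) → (ℤ → X) → Prop :=
  Relation.ReflTransGen (StepD V)

/-- One step of the relation generating `≃` on strings: a `≃_S`-step, a componentwise
`≃_d`-relation, or a componentwise semi-coarse homotopy. -/
def StepFull {X : Type u} (V : Set (Set (X × X))) (F G : List (ℤ → X)) : Prop :=
  StepS V F G ∨ List.Forall₂ (SimD V) F G ∨ List.Forall₂ (SCHomotopic Z1 V) F G

/-- The equivalence relation `≃` on strings. -/
def SimFull {X : Type u} (V : Set (Set (X × X))) : List (ℤ → X) → List (ℤ → X) → Prop :=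
  Relation.ReflTransGen (StepFull V)

lemma union_mem_aux {Y : Type v} {W : Set (Set (Y × Y))} (hW : IsSemiCoarseStructure W) :
    ∀ (n : ℕ) (g : Fin n → Set (Y × Y)), (∀ i, g i ∈ W) → (⋃ i, g i) ∈ W := by
  intro n
  induction n with
  | zero =>
    intro g _
    rw [Set.iUnion_of_empty]
    exact hW.2.1 _ _ hW.1 (Set.empty_subset _)
  | succ n ih =>
    intro g hg
    have h : (⋃ i : Fin (n+1), g i) = g 0 ∪ ⋃ i : Fin n, g i.succ := by
      ext x; simp [Fin.exists_fin_succ]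
    rw [h]
    exact hW.2.2.1 _ _ (hg 0) (ih _ fun i => hg i.succ)

/-- If the controlled sets of `(X,𝒱)` decompose along the cover
`X = ⋃ i, Xᵢ`, and every restriction `f|_{Xᵢ}` is bornologous, then `f` is bornologous. -/
theorem bornologous_of_partition {X : Type u} {Y : Type v}
    (V : Set (Set (X × X))) (W : Set (Set (Y × Y)))
    (hV : IsSemiCoarseStructure V) (hW : IsSemiCoarseStructure W)
    (n : ℕ) (Xi : Fin n → Set X)
    (hcover : (⋃ i : Fin n, Xi i) = Set.univ)
    (hdecomp : ∀ Vc ∈ V, ∃ Vi : Fin n → Set (X × X),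
      (∀ i : Fin n, Vi i ∈ subFamily V (Xi i)) ∧ Vc = ⋃ i : Fin n, Vi i)
    (f : X → Y)
    (hrestr : ∀ i : Fin n,
      Bornologous (subStruct V (Xi i)) W (fun x : (Xi i) => f (x : X))) :
    Bornologous V W f := by
  intro A hA
  obtain ⟨Vi, hVi, rfl⟩ := hdecomp A hA
  have himg : ∀ i, (fun p : X × X => (f p.1, f p.2)) '' Vi i ∈ W := by
    intro i
    obtain ⟨V', hV', hVi'⟩ := hVi i
    set Ai : Set (Xi i × Xi i) := {p | ((p.1 : X), (p.2 : X)) ∈ Vi i} with hAidef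
    have hAi : Ai ∈ subStruct V (Xi i) := by
      have heq1 : (fun p : Xi i × Xi i => ((p.1 : X), (p.2 : X))) '' Ai = Vi i := by
        ext ⟨x, y⟩
        constructor
        · rintro ⟨⟨a, b⟩, hab, h⟩; cases h; exact hab
        · intro hxy
          have hxy' := hVi' ▸ hxy
          exact ⟨(⟨x, hxy'.2.1⟩, ⟨y, hxy'.2.2⟩), hxy, rfl⟩
      rw [subStruct, Set.mem_setOf_eq, heq1]
      exact hV.2.1 _ _ hV' (by rw [hVi']; exact Set.inter_subset_left)
    have hb := hrestr i Ai hAi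
    have heq : (fun p : Xi i × Xi i => (f p.1, f p.2)) '' Ai
        = (fun p : X × X => (f p.1, f p.2)) '' Vi i := by
      ext ⟨y1, y2⟩
      constructor
      · rintro ⟨⟨a, b⟩, hab, h⟩; exact ⟨((a : X), (b : X)), hab, h⟩
      · rintro ⟨⟨x1, x2⟩, hxy, h⟩
        have hxy' := hVi' ▸ hxy
        exact ⟨(⟨x1, hxy'.2.1⟩, ⟨x2, hxy'.2.2⟩), hxy, h⟩
    rwa [heq] at hb
  rw [Set.image_iUnion]
  exact union_mem_aux hW n _ himg
end

section
/- Let A, B, C be semi-coarse spaces and f : C → A, g : C → B bornologous maps, and let A ⊔_C B := (A ⊔ B)/(f(c) ∼ g(c)) carry the semi-coarse structure induced by the disjoint union followed by the quotient, with canonical maps i₁ : A → A ⊔_C B and i₂ : B → A ⊔_C B. Then A ⊔_C B is the pushout of f and g in the category of semi-coarse spaces and bornologous maps: i₁ ∘ f = i₂ ∘ g, and for every semi-coarse space X and bornologous maps j₁ : A → X, j₂ : B → X with j₁ ∘ f = j₂ ∘ g, there exists a unique bornologous map h : A ⊔_C B → X such that j₁ = h ∘ i₁ and j₂ = h ∘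 i₂. -/
open Set

universe u v w

/-- `A ⊔_C B`, the quotient of the disjoint union `A ⊕ B` identifying
`inl (f c)` with `inr (g c)` and endowed with the disjoint-union-then-quotient semi-coarse
structure, is the pushout of `f` and `g` in the category of semi-coarse spaces and
bornologous maps. -/
theorem semiCoarse_pushout_universal {A : Type u} {B : Type u} {C : Type u}
    (VA : Set (Set (A × A))) (VB : Set (Set (B × B))) (VC : Set (Set (C × C)))
    (hVA : IsSemiCoarseStructure VA) (hVB : IsSemiCoarseStructure VB)
    (hVC : IsSemiCoarseStructure VC)
    (f : C → A) (g : C → B)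
    (hf : Bornologous VC VA f) (hg : Bornologous VC VB g) :
    (∀ c : C, Quot.mk (pushRel f g) (Sum.inl (f c)) = Quot.mk (pushRel f g) (Sum.inr (g c))) ∧
    (Bornologous VA (quotStruct (djStruct2 VA VB) (Quot.mk (pushRel f g)))
        (fun a : A => Quot.mk (pushRel f g) (Sum.inl a))) ∧
    (Bornologous VB (quotStruct (djStruct2 VA VB) (Quot.mk (pushRel f g)))
        (fun b : B => Quot.mk (pushRel f g) (Sum.inr b))) ∧
    ∀ (Z : Type v) (VZ : Set (Set (Z × Z))), IsSemiCoarseStructure VZ →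
      ∀ (j₁ : A → Z) (j₂ : B → Z), Bornologous VA VZ j₁ → Bornologous VB VZ j₂ →
        (∀ c : C, j₁ (f c) = j₂ (g c)) →
        ∃! h : Quot (pushRel f g) → Z,
          Bornologous (quotStruct (djStruct2 VA VB) (Quot.mk (pushRel f g))) VZ h ∧
          (∀ a : A, j₁ a = h (Quot.mk (pushRel f g) (Sum.inl a))) ∧
          (∀ b : B, j₂ b = h (Quot.mk (pushRel f g) (Sum.inr b))) := by
  refine ⟨fun c => Quot.sound ⟨c, rfl, rfl⟩, ?_, ?_, ?_⟩
  · -- i₁ bornologous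
    intro S hS
    refine ⟨(fun p : A × A => ((Sum.inl p.1 : A ⊕ B), (Sum.inl p.2 : A ⊕ B))) '' S,
      ⟨S, hS, ∅, hVB.2.1 ∅ _ hVB.1 (Set.empty_subset _), by simp⟩, ?_⟩
    ext q
    simp only [Set.mem_image]
    constructor
    · rintro ⟨p, hp, rfl⟩; exact ⟨(Sum.inl p.1, Sum.inl p.2), ⟨p, hp, rfl⟩, rfl⟩
    · rintro ⟨p', ⟨p, hp, rfl⟩, rfl⟩; exact ⟨p, hp, rfl⟩
  · -- i₂ bornologous
    intro S hS
    refine ⟨(fun p : B × B => ((Sum.inr p.1 : A ⊕ B), (Sum.inr p.2 : A ⊕ B))) '' S,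
      ⟨∅, hVA.2.1 ∅ _ hVA.1 (Set.empty_subset _), S, hS, by simp⟩, ?_⟩
    ext q
    simp only [Set.mem_image]
    constructor
    · rintro ⟨p, hp, rfl⟩; exact ⟨(Sum.inr p.1, Sum.inr p.2), ⟨p, hp, rfl⟩, rfl⟩
    · rintro ⟨p', ⟨p, hp, rfl⟩, rfl⟩; exact ⟨p, hp, rfl⟩
  · intro Z VZ hVZ j₁ j₂ hj₁ hj₂ hcomm
    refine ⟨Quot.lift (Sum.elim j₁ j₂) ?_, ⟨?_, fun a => rfl, fun b => rfl⟩, ?_⟩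
    · rintro x y ⟨c, rfl, rfl⟩
      exact hcomm c
    · -- bornologous
      rintro W ⟨V', ⟨CA, hCA, CB, hCB, rfl⟩, rfl⟩
      have : (fun p : Quot (pushRel f g) × Quot (pushRel f g) =>
          (Quot.lift (Sum.elim j₁ j₂) (by rintro x y ⟨c, rfl, rfl⟩; exact hcomm c) p.1,
           Quot.lift (Sum.elim j₁ j₂) (by rintro x y ⟨c, rfl, rfl⟩; exact hcomm c) p.2)) ''
          ((fun p : (A ⊕ B) × (A ⊕ B) =>
            (Quot.mk (pushRel f g) p.1, Quot.mk (pushRel f g) p.2)) ''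
            ((fun p : A × A => ((Sum.inl p.1 : A ⊕ B), (Sum.inl p.2 : A ⊕ B))) '' CA ∪
             (fun p : B × B => ((Sum.inr p.1 : A ⊕ B), (Sum.inr p.2 : A ⊕ B))) '' CB))
          = (fun p : A × A => (j₁ p.1, j₁ p.2)) '' CA ∪
            (fun p : B × B => (j₂ p.1, j₂ p.2)) '' CB := by
        rw [← Set.image_comp]
        rw [Set.image_union, ← Set.image_comp, ← Set.image_comp]
        rfl
      rw [this]
      exact hVZ.2.2.1 _ _ (hj₁ CA hCA) (hj₂ CB hCB)
    · rintro h' ⟨hb, h1, h2⟩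
      funext x
      induction x using Quot.ind with
      | _ x =>
        cases x with
        | inl a => exact (h1 a).symm
        | inr b => exact (h2 b).symm
end

section
/- Let (X,𝒱) be a semi-coarse space and A, B ⊆ X. If the singleton {(x₁,x₂)} belongs to the pushout structure 𝒱_{A⊔_{A∩B}B}, then: (1) if x₁ ∈ A and x₂ ∉ A, then x₁ ∈ A ∩ B; and (2) if x₁ ∈ B and x₂ ∉ B, then x₁ ∈ A ∩ B. -/
open Set

universe u v w

/-- If a singleton `{(x₁,x₂)}` is controlled in the pushout structure
`𝒱_{A ⊔_{A∩B} B}`, then a point of the pair lying in `A` (resp. `B`) whose partner leaves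
`A` (resp. `B`) must lie in `A ∩ B`. -/
theorem pushoutStruct_singleton_mem_inter {X : Type u}
    (V : Set (Set (X × X))) (hV : IsSemiCoarseStructure V)
    (A B : Set X) (x₁ x₂ : X)
    (h : ({(x₁, x₂)} : Set (X × X)) ∈ pushoutStruct V A B) :
    (x₁ ∈ A → x₂ ∉ A → x₁ ∈ A ∩ B) ∧ (x₁ ∈ B → x₂ ∉ B → x₁ ∈ A ∩ B) := by
  obtain ⟨V₁, _, V₂, _, h₁, h₂, heq⟩ := h
  have hmem : (x₁, x₂) ∈ V₁ ∪ V₂ := by rw [← heq]; exact rfl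
  constructor
  · intro hA hnA
    rcases hmem with hm | hm
    · exact absurd (h₁ hm).2 hnA
    · exact ⟨hA, (h₂ hm).1⟩
  · intro hB hnB
    rcases hmem with hm | hm
    · exact ⟨(h₁ hm).1, hB⟩
    · exact absurd (h₂ hm).2 hnB
end

section
/- Let (X,𝒱) be a semi-coarse space. Then X is disconnected if and only if there exist nonempty A, B ⊆ X which well-split X and satisfy A ∩ B = ∅. -/
open Set

universe u v w

namespace SCAux

variable {X : Type u} {V : Set (Set (X × X))}

/-- The edge relation of a semi-coarse space. -/
def E (V : Set (Set (X × X))) (x y : X) : Prop := ({(x, y)} : Set (X × X)) ∈ V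

theorem empty_mem (hV : IsSemiCoarseStructure V) : (∅ : Set (X × X)) ∈ V :=
  hV.2.1 _ _ hV.1 (Set.empty_subset _)

theorem diag_singleton_mem (hV : IsSemiCoarseStructure V) (x : X) :
    ({(x, x)} : Set (X × X)) ∈ V :=
  hV.2.1 _ _ hV.1 (by simp [Set.diagonal])

theorem E_symm (hV : IsSemiCoarseStructure V) {x y : X} (h : E V x y) : E V y x := by
  have := hV.2.2.2 _ h
  simpa [E, Set.image_singleton] using this

/-- The maximal controlled set of a subspace of `ℤ₁`. -/
def emax (s : Set ℤ) : Set (s × s) := {p | |((p.2 : ℤ)) - ((p.1 : ℤ))| ≤ 1}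

theorem emax_mem (s : Set ℤ) : emax s ∈ subStruct Z1 s := by
  rintro w ⟨⟨p, q⟩, hpq, rfl⟩
  exact hpq

theorem born_of_emax (hV : IsSemiCoarseStructure V) {s : Set ℤ} (γ : s → X)
    (h : (fun p : s × s => (γ p.1, γ p.2)) '' emax s ∈ V) :
    Bornologous (subStruct Z1 s) V γ := by
  intro A hA
  refine hV.2.1 _ _ h ?_
  rintro w ⟨⟨p, q⟩, hpq, rfl⟩
  exact ⟨(p, q), hA ⟨(p, q), hpq, rfl⟩, rfl⟩

theorem reach_of_chain (hV : IsSemiCoarseStructure V) {x y : X}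
    (h : Relation.ReflTransGen (E V) x y) : SCReachable V x y := by
  induction h with
  | refl =>
      refine ⟨0, fun _ => x, ?_, rfl, rfl⟩
      intro A _
      refine hV.2.1 _ _ hV.1 ?_
      rintro w ⟨p, _, rfl⟩
      exact rfl
  | @tail c z hac hcz ih =>
      obtain ⟨n, γ, hb, h0, hn⟩ := ih
      refine ⟨n + 1,
        fun i => if h : (i : ℤ) ≤ (n : ℤ) then γ ⟨(i : ℤ), ⟨i.2.1, h⟩⟩ else z, ?_, ?_, ?_⟩
      · refine born_of_emax hV _ ?_
        have hS : (fun p : (Set.Icc (0:ℤ) (n:ℤ)) × (Set.Icc (0:ℤ) (n:ℤ)) =>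
            (γ p.1, γ p.2)) '' emax _ ∈ V := hb _ (emax_mem _)
        have hcz' : ({((γ ⟨(n:ℤ), Set.mem_Icc.mpr ⟨Int.natCast_nonneg n, le_rfl⟩⟩), z)} :
            Set (X × X)) ∈ V := by rw [hn]; exact hcz
        have hzc' := E_symm hV (x := _) (y := z) hcz'
        have hT : ((fun p : (Set.Icc (0:ℤ) (n:ℤ)) × (Set.Icc (0:ℤ) (n:ℤ)) =>
            (γ p.1, γ p.2)) '' emax _ ∪
            ({((γ ⟨(n:ℤ), Set.mem_Icc.mpr ⟨Int.natCast_nonneg n, le_rfl⟩⟩), z)} ∪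
              ({(z, (γ ⟨(n:ℤ), Set.mem_Icc.mpr ⟨Int.natCast_nonneg n, le_rfl⟩⟩))} ∪
                {(z, z)}))) ∈ V :=
          hV.2.2.1 _ _ hS (hV.2.2.1 _ _ hcz'
            (hV.2.2.1 _ _ hzc' (diag_singleton_mem hV z)))
        refine hV.2.1 _ _ hT ?_
        rintro w ⟨⟨p, q⟩, hpq, rfl⟩
        have hp2 := p.2
        have hq2 := q.2
        rw [Set.mem_Icc] at hp2 hq2
        have hpn1 : (p : ℤ) ≤ (n : ℤ) + 1 := by
          have := hp2.2; push_cast at this; omega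
        have hqn1 : (q : ℤ) ≤ (n : ℤ) + 1 := by
          have := hq2.2; push_cast at this; omega
        have habs : -1 ≤ (q : ℤ) - (p : ℤ) ∧ (q : ℤ) - (p : ℤ) ≤ 1 := abs_le.mp hpq
        by_cases hp : (p : ℤ) ≤ (n : ℤ) <;> by_cases hq : (q : ℤ) ≤ (n : ℤ)
        · left
          simp only [dif_pos hp, dif_pos hq]
          exact ⟨(⟨(p : ℤ), ⟨hp2.1, hp⟩⟩, ⟨(q : ℤ), ⟨hq2.1, hq⟩⟩), hpq, rfl⟩
        · right; left
          simp only [dif_pos hp, dif_neg hq]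
          have hpn : (p : ℤ) = (n : ℤ) := by omega
          have : (⟨(p : ℤ), ⟨hp2.1, hp⟩⟩ : Set.Icc (0:ℤ) (n:ℤ)) =
              ⟨(n : ℤ), Set.mem_Icc.mpr ⟨Int.natCast_nonneg n, le_rfl⟩⟩ :=
            Subtype.ext hpn
          rw [this]
          exact rfl
        · right; right; left
          simp only [dif_neg hp, dif_pos hq]
          have hqn : (q : ℤ) = (n : ℤ) := by omega
          have : (⟨(q : ℤ), ⟨hq2.1, hq⟩⟩ : Set.Icc (0:ℤ) (n:ℤ)) =
              ⟨(n : ℤ), Set.mem_Icc.mpr ⟨Int.natCast_nonneg n, le_rfl⟩⟩ :=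
            Subtype.ext hqn
          rw [this]
          exact rfl
        · right; right; right
          simp only [dif_neg hp, dif_neg hq]
          rfl
      · have hcond : ((⟨0, Set.mem_Icc.mpr ⟨le_rfl, Int.natCast_nonneg (n+1)⟩⟩ :
            Set.Icc (0:ℤ) ((n+1 : ℕ) : ℤ)) : ℤ) ≤ (n : ℤ) := Int.natCast_nonneg n
        simp only [dif_pos hcond]
        exact h0
      · have hcond : ¬ ((⟨((n+1 : ℕ) : ℤ), Set.mem_Icc.mpr ⟨Int.natCast_nonneg (n+1),
            le_rfl⟩⟩ : Set.Icc (0:ℤ) ((n+1 : ℕ) : ℤ)) : ℤ) ≤ (n : ℤ) := by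
          push_cast; omega
        simp only [dif_neg hcond]

theorem chain_of_reach (hV : IsSemiCoarseStructure V) {x y : X}
    (h : SCReachable V x y) : Relation.ReflTransGen (E V) x y := by
  obtain ⟨n, γ, hb, h0, hn⟩ := h
  have key : ∀ k : ℕ, (hk : (k : ℤ) ≤ (n : ℤ)) →
      Relation.ReflTransGen (E V) x (γ ⟨(k : ℤ), Set.mem_Icc.mpr ⟨Int.natCast_nonneg k, hk⟩⟩) := by
    intro k
    induction k with
    | zero =>
        intro hk
        have : γ ⟨((0:ℕ) : ℤ), Set.mem_Icc.mpr ⟨Int.natCast_nonneg 0, hk⟩⟩ = x := h0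
        rw [this]
    | succ k ih =>
        intro hk
        have hk' : (k : ℤ) ≤ (n : ℤ) := by push_cast at hk ⊢; omega
        refine (ih hk').tail ?_
        have hmem : ({((⟨(k : ℤ), Set.mem_Icc.mpr ⟨Int.natCast_nonneg k, hk'⟩⟩ :
            Set.Icc (0:ℤ) (n:ℤ)),
            (⟨((k+1 : ℕ) : ℤ), Set.mem_Icc.mpr ⟨Int.natCast_nonneg (k+1), hk⟩⟩ :
            Set.Icc (0:ℤ) (n:ℤ)))} :
            Set (Set.Icc (0:ℤ) (n:ℤ) × Set.Icc (0:ℤ) (n:ℤ))) ∈ subStruct Z1 _ := by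
          rintro w ⟨p, hp, rfl⟩
          rw [Set.mem_singleton_iff] at hp
          subst hp
          show |((k+1 : ℕ) : ℤ) - (k : ℤ)| ≤ 1
          push_cast; simp
        have := hb _ hmem
        rw [Set.image_singleton] at this
        exact this
  have := key n le_rfl
  rwa [hn] at this

end SCAux

/-- A semi-coarse space is disconnected iff some nonempty `A, B` well-split it
with `A ∩ B = ∅`. -/
theorem disconnected_iff_wellSplit_disjoint {X : Type u}
    (V : Set (Set (X × X))) (hV : IsSemiCoarseStructure V) :
    ¬ SCConnected V ↔ ∃ A B : Set X, WellSplit V A B ∧ A ∩ B = ∅ := by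
  constructor
  · intro h
    simp only [SCConnected, not_forall] at h
    obtain ⟨x₀, y₀, hxy⟩ := h
    set A : Set X := {z | Relation.ReflTransGen (SCAux.E V) x₀ z} with hAdef
    refine ⟨A, Aᶜ, ⟨⟨x₀, Relation.ReflTransGen.refl⟩,
      ⟨y₀, fun hy => hxy (SCAux.reach_of_chain hV hy)⟩,
      Set.union_compl_self _, ?_⟩, Set.inter_compl_self _⟩
    intro x y y' hmem hnot _
    exfalso
    apply hnot
    have hxyE : SCAux.E V x y :=
      hV.2.1 _ _ hmem (Set.singleton_subset_iff.mpr (Set.mem_insert _ _))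
    have hxy'E : SCAux.E V x y' :=
      hV.2.1 _ _ hmem (Set.singleton_subset_iff.mpr
        (Set.mem_insert_of_mem _ rfl))
    by_cases hx : x ∈ A
    · have hy : y ∈ A := hx.tail hxyE
      have hy' : y' ∈ A := hx.tail hxy'E
      refine ⟨{(x, y), (x, y')}, hmem, ∅, SCAux.empty_mem hV, ?_,
        Set.empty_subset _, (Set.union_empty _).symm⟩
      rintro p hp
      rcases hp with hp | hp
      · rw [hp]; exact ⟨hx, hy⟩
      · rw [Set.mem_singleton_iff] at hp; rw [hp]; exact ⟨hx, hy'⟩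
    · have hy : y ∈ Aᶜ := fun hy => hx (hy.tail (SCAux.E_symm hV hxyE))
      have hy' : y' ∈ Aᶜ := fun hy' => hx (hy'.tail (SCAux.E_symm hV hxy'E))
      refine ⟨∅, SCAux.empty_mem hV, {(x, y), (x, y')}, hmem,
        Set.empty_subset _, ?_, (Set.empty_union _).symm⟩
      rintro p hp
      rcases hp with hp | hp
      · rw [hp]; exact ⟨hx, hy⟩
      · rw [Set.mem_singleton_iff] at hp; rw [hp]; exact ⟨hx, hy'⟩
  · rintro ⟨A, B, ⟨hA, hB, hAB, hws⟩, hdisj⟩ hconn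
    obtain ⟨a, ha⟩ := hA
    obtain ⟨b, hb⟩ := hB
    have hchain := SCAux.chain_of_reach hV (hconn a b)
    have cross : ∃ x y : X, x ∈ A ∧ y ∈ B ∧ SCAux.E V x y := by
      revert hb
      induction hchain with
      | refl =>
          intro hb
          have : a ∈ A ∩ B := ⟨ha, hb⟩
          rw [hdisj] at this
          exact this.elim
      | @tail c z hac hcz ih =>
          intro hz
          by_cases hc : c ∈ A
          · exact ⟨c, z, hc, hz, hcz⟩
          · have hcB : c ∈ B := by
              have : c ∈ A ∪ B := hAB ▸ Set.mem_univ c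
              rcases this with h | h
              · exact absurd h hc
              · exact h
            exact ih hcB
    obtain ⟨x, y, hxA, hyB, hxyE⟩ := cross
    have hxB : x ∉ B := fun h => by
      have : x ∈ A ∩ B := ⟨hxA, h⟩
      rw [hdisj] at this; exact this.elim
    have hyA : y ∉ A := fun h => by
      have : y ∈ A ∩ B := ⟨h, hyB⟩
      rw [hdisj] at this; exact this.elim
    have h1 : ({(x, y), (x, y)} : Set (X × X)) ∈ V := by
      rw [Set.pair_eq_singleton]; exact hxyE
    have h2 : ({(x, y), (x, y)} : Set (X × X)) ∉ pushoutStruct V A B := by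
      rintro ⟨V₁, _, V₂, _, hs1, hs2, heq⟩
      have hm : ((x, y) : X × X) ∈ V₁ ∪ V₂ := by
        rw [← heq]; exact Set.mem_insert _ _
      rcases hm with hm | hm
      · exact hyA (hs1 hm).2
      · exact hxB (hs2 hm).1
    have h3 : ({(y, y)} : Set (X × X)) ∈ pushoutStruct V A B :=
      ⟨∅, SCAux.empty_mem hV, {(y, y)}, SCAux.diag_singleton_mem hV y,
        Set.empty_subset _,
        Set.singleton_subset_iff.mpr ⟨hyB, hyB⟩, (Set.empty_union _).symm⟩
    obtain ⟨⟨γ, γ', hγ, hγ', hγ0, _, hγ2, _, _⟩, _⟩ := hws x y y h1 h2 h3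
    have edge01 : ({(i2p0, i2p1)} : Set (I2 × I2)) ∈ subStruct Z1 I2 := by
      rintro w ⟨r, hr, hrr⟩
      rw [Set.mem_singleton_iff] at hr
      subst hr
      cases hrr
      show |(1 : ℤ) - 0| ≤ 1
      norm_num
    have edge12 : ({(i2p1, i2p2)} : Set (I2 × I2)) ∈ subStruct Z1 I2 := by
      rintro w ⟨r, hr, hrr⟩
      rw [Set.mem_singleton_iff] at hr
      subst hr
      cases hrr
      show |(2 : ℤ) - 1| ≤ 1
      norm_num
    have him1 := hγ _ edge01
    have him2 := hγ _ edge12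
    rw [Set.image_singleton] at him1 him2
    have hmA : γ i2p1 ∈ A := by
      obtain ⟨V₁, _, V₂, _, hs1, hs2, heq⟩ := him1
      have hm : (γ i2p0, γ i2p1) ∈ V₁ ∪ V₂ := by rw [← heq]; exact rfl
      rcases hm with hm | hm
      · exact (hs1 hm).2
      · exact absurd ((hγ0 ▸ (hs2 hm).1 : x ∈ B)) hxB
    have hmB : γ i2p1 ∈ B := by
      obtain ⟨V₁, _, V₂, _, hs1, hs2, heq⟩ := him2
      have hm : (γ i2p1, γ i2p2) ∈ V₁ ∪ V₂ := by rw [← heq]; exact rfl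
      rcases hm with hm | hm
      · exact absurd ((hγ2 ▸ (hs1 hm).2 : y ∈ A)) hyA
      · exact (hs2 hm).1
    have : γ i2p1 ∈ A ∩ B := ⟨hmA, hmB⟩
    rw [hdisj] at this
    exact this.elim
end

section
/- Let X be a semi-coarse space and let F be a string from ⟨f⟩_∞ to ⟨g⟩_∞ and G a string from ⟨g⟩_∞ to ⟨h⟩_∞. Then the concatenation of ≃_S-classes given by ⟨F⟩_S ⋆ ⟨G⟩_S := ⟨F ⋆ G⟩_S is well-defined: if F' ≃_S F and G' ≃_S G, then F' ⋆ G' ≃_S F ⋆ G. -/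
open Set

universe u v w

private lemma delOp_append_right {X : Type u} (G : List (ℤ → X)) {F F' : List (ℤ → X)}
    (h : DelOp F F') : DelOp (F ++ G) (F' ++ G) := by
  obtain ⟨P, S, u, v, N, h1, h2, h3, h4⟩ := h
  exact ⟨P, S ++ G, u, v, N, by simp [h1], by simp [h2],
    le_trans h3 (by simp), h4⟩

private lemma delOp_append_left {X : Type u} (H : List (ℤ → X)) {F F' : List (ℤ → X)}
    (h : DelOp F F') : DelOp (H ++ F) (H ++ F') := by
  obtain ⟨P, S, u, v, N, h1, h2, h3, h4⟩ := h
  exact ⟨H ++ P, S, u, v, N, by simp [h1], by simp [h2],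
    le_trans h3 (by simp), h4⟩

private lemma mergeRel_append_right {X : Type u} (V : Set (Set (X × X))) (G : List (ℤ → X))
    {F F' : List (ℤ → X)} (h : MergeRel V F F') : MergeRel V (F ++ G) (F' ++ G) := by
  obtain ⟨P, S, u, v, g, x₀, N, M, j, h1, h2, rest⟩ := h
  exact ⟨P, S ++ G, u, v, g, x₀, N, M, j, by simp [h1], by simp [h2], rest⟩

private lemma mergeRel_append_left {X : Type u} (V : Set (Set (X × X))) (H : List (ℤ → X))
    {F F' : List (ℤ → X)} (h : MergeRel V F F') : MergeRel V (H ++ F) (H ++ F') := by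
  obtain ⟨P, S, u, v, g, x₀, N, M, j, h1, h2, rest⟩ := h
  exact ⟨H ++ P, S, u, v, g, x₀, N, M, j, by simp [h1], by simp [h2], rest⟩

private lemma stepS_append_right {X : Type u} (V : Set (Set (X × X))) (G : List (ℤ → X))
    {F F' : List (ℤ → X)} (h : StepS V F F') : StepS V (F ++ G) (F' ++ G) := by
  rcases h with h | h | h | h
  · exact Or.inl (delOp_append_right G h)
  · exact Or.inr (Or.inl (delOp_append_right G h))
  · exact Or.inr (Or.inr (Or.inl (mergeRel_append_right V G h)))
  · exact Or.inr (Or.inr (Or.inr (mergeRel_append_right V G h)))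

private lemma stepS_append_left {X : Type u} (V : Set (Set (X × X))) (H : List (ℤ → X))
    {F F' : List (ℤ → X)} (h : StepS V F F') : StepS V (H ++ F) (H ++ F') := by
  rcases h with h | h | h | h
  · exact Or.inl (delOp_append_left H h)
  · exact Or.inr (Or.inl (delOp_append_left H h))
  · exact Or.inr (Or.inr (Or.inl (mergeRel_append_left V H h)))
  · exact Or.inr (Or.inr (Or.inr (mergeRel_append_left V H h)))

private lemma simS_append_right {X : Type u} (V : Set (Set (X × X))) (G : List (ℤ → X))
    {F F' : List (ℤ → X)} (h : SimS V F F') : SimS V (F ++ G) (F' ++ G) :=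
  Relation.ReflTransGen.lift (· ++ G) (fun _ _ hab => stepS_append_right V G hab) _ _ h

private lemma simS_append_left {X : Type u} (V : Set (Set (X × X))) (H : List (ℤ → X))
    {F F' : List (ℤ → X)} (h : SimS V F F') : SimS V (H ++ F) (H ++ F') :=
  Relation.ReflTransGen.lift (H ++ ·) (fun _ _ hab => stepS_append_left V H hab) _ _ h

/-- Concatenation of `≃_S`-classes of strings is well-defined. -/
theorem simS_concat_well_defined {X : Type u}
    (V : Set (Set (X × X))) (hV : IsSemiCoarseStructure V)
    (f g h : ℤ → X) (F G F' G' : List (ℤ → X))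
    (hF : IsString V f g F) (hG : IsString V g h G)
    (hF' : SimS V F' F) (hG' : SimS V G' G) :
    SimS V (F' ++ G') (F ++ G) := by
  exact (simS_append_right V G' hF').trans (simS_append_left V F hG')
end

section
/- Let X be a semi-coarse space and F = (f₁,…,fₙ) an n-string from ⟨f⟩_∞ to ⟨g⟩_∞. Then ⟨(f) ⋆ F⟩_S = ⟨F⟩_S = ⟨F ⋆ (g)⟩_S. Consequently ⟨(f') ⋆ F⟩_S = ⟨F⟩_S = ⟨F ⋆ (g')⟩_S for every f' ∈ ⟨f⟩_∞ and g' ∈ ⟨g⟩_∞. -/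
open Set

universe u v w

/-! ### Auxiliary machinery for the proof -/

section Aux

private lemma f_eq_aux {X : Type u} {f : ℤ → X} (hsym : SymMap f) (e₁ e₂ : ℤ)
    (h : e₁ = e₂ ∨ e₁ = -e₂) : f e₁ = f e₂ := by
  rcases h with h | h
  · rw [h]
  · rw [h]; exact (hsym e₂).symm

private lemma born_precomp {X : Type u} {V : Set (Set (X × X))} (hV : IsSemiCoarseStructure V)
    {f : ℤ → X} (hb : Bornologous Z1 V f) (θ : ℤ → ℤ)
    (hθ : ∀ u v : ℤ, -1 ≤ v - u → v - u ≤ 1 → -1 ≤ θ v - θ u ∧ θ v - θ u ≤ 1) :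
    Bornologous Z1 V (fun z => f (θ z)) := by
  intro A hA
  apply hV.2.1 _ _ (hb {p : ℤ × ℤ | |p.2 - p.1| ≤ 1} (Set.Subset.refl _))
  rintro y ⟨⟨z1, z2⟩, hz, rfl⟩
  have h1 : |z2 - z1| ≤ 1 := hA hz
  rw [abs_le] at h1
  refine ⟨(θ z1, θ z2), ?_, rfl⟩
  show |θ z2 - θ z1| ≤ 1
  rw [abs_le]
  exact hθ z1 z2 h1.1 h1.2

private lemma born_of_lip {X : Type u} {V : Set (Set (X × X))} (hV : IsSemiCoarseStructure V)
    {f : ℤ → X} (hbf : Bornologous Z1 V f) (s : Set ℤ) (θ : ℤ → ℤ → ℤ)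
    (hθ : ∀ x x' k k' : ℤ, -1 ≤ x' - x → x' - x ≤ 1 → -1 ≤ k' - k → k' - k ≤ 1 →
      -1 ≤ θ x' k' - θ x k ∧ θ x' k' - θ x k ≤ 1) :
    Bornologous (prodStruct (subStruct Z1 s) Z1) V
      (fun q : ↥s × ℤ => f (θ (q.1 : ℤ) q.2)) := by
  intro U hU
  obtain ⟨A, hA, B, hB, hsub⟩ := hU
  apply hV.2.1 _ _ (hbf {p : ℤ × ℤ | |p.2 - p.1| ≤ 1} (Set.Subset.refl _))
  rintro y ⟨⟨q1, q2⟩, hq, rfl⟩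
  obtain ⟨h1, h2⟩ := hsub hq
  have hx : |(q2.1 : ℤ) - (q1.1 : ℤ)| ≤ 1 := hA (Set.mem_image_of_mem _ h1)
  have hk : |q2.2 - q1.2| ≤ 1 := hB h2
  rw [abs_le] at hx hk
  refine ⟨(θ (q1.1 : ℤ) q1.2, θ (q2.1 : ℤ) q2.2), ?_, rfl⟩
  show |θ (q2.1 : ℤ) q2.2 - θ (q1.1 : ℤ) q1.2| ≤ 1
  rw [abs_le]
  exact hθ _ _ _ _ hx.1 hx.2 hk.1 hk.2

private lemma null_right {X : Type u} {V : Set (Set (X × X))} (hV : IsSemiCoarseStructure V)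
    {h : ℤ → X} (hbh : Bornologous Z1 V h) (m j : ℤ)
    (hc : ∀ z, m ≤ z → h z = h m) :
    HomotopicToConstOn V h {z : ℤ | j ≤ z} := by
  refine ⟨h j, fun q => h (min ((q.1 : ℤ)) (max j (m - q.2))),
    born_of_lip hV hbh _ (fun x k => min x (max j (m - k)))
      (by intro x x' k k' h1 h2 h3 h4; omega), ⟨0, ?_⟩, ⟨m - j, ?_⟩⟩
  · intro x k hk
    have hx : j ≤ (x : ℤ) := x.2
    show h _ = h _
    rcases le_or_gt ((x : ℤ)) (max j (m - k)) with hle | hgt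
    · rw [min_eq_left hle]
    · rw [min_eq_right hgt.le, hc _ (by omega), hc ((x : ℤ)) (by omega)]
  · intro x k hk
    have hx : j ≤ (x : ℤ) := x.2
    show h _ = h j
    have e : min ((x : ℤ)) (max j (m - k)) = j := by omega
    rw [e]

private lemma null_left {X : Type u} {V : Set (Set (X × X))} (hV : IsSemiCoarseStructure V)
    {h : ℤ → X} (hbh : Bornologous Z1 V h) (m j : ℤ)
    (hc : ∀ z, z ≤ m → h z = h m) :
    HomotopicToConstOn V h {z : ℤ | z ≤ j} := by
  refine ⟨h j, fun q => h (max ((q.1 : ℤ)) (min j (m + q.2))),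
    born_of_lip hV hbh _ (fun x k => max x (min j (m + k)))
      (by intro x x' k k' h1 h2 h3 h4; omega), ⟨0, ?_⟩, ⟨j - m, ?_⟩⟩
  · intro x k hk
    have hx : (x : ℤ) ≤ j := x.2
    show h _ = h _
    rcases le_or_gt (min j (m + k)) ((x : ℤ)) with hle | hgt
    · rw [max_eq_left hle]
    · rw [max_eq_right hgt.le, hc _ (by omega), hc ((x : ℤ)) (by omega)]
  · intro x k hk
    have hx : (x : ℤ) ≤ j := x.2
    show h _ = h j
    have e : max ((x : ℤ)) (min j (m + k)) = j := by omega
    rw [e]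

/-! Periodicity infrastructure -/

private def PerF {X : Type u} (f : ℤ → X) (c q : ℤ) : Prop :=
  ∀ z, c ≤ z → f (z + q) = f z

private lemma perF_iter {X : Type u} {f : ℤ → X} {c q : ℤ} (h : PerF f c q) (hq : 0 ≤ q) :
    ∀ (m : ℕ) (z : ℤ), c ≤ z → f (z + q * m) = f z := by
  intro m
  induction m with
  | zero => intro z _; norm_num
  | succ n ih =>
      intro z hz
      have hqn : 0 ≤ q * (n : ℤ) := mul_nonneg hq (by positivity)
      push_cast
      rw [show z + q * ((n : ℤ) + 1) = (z + q * n) + q by ring, h _ (by omega), ih z hz]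

private lemma perF_transport {X : Type u} {f : ℤ → X} {cA pA cB qB : ℤ}
    (hqB : 0 < qB) (hpA : 0 ≤ pA) (hP : PerF f cA pA) (hQ : PerF f cB qB) :
    PerF f cB pA := by
  intro z hz
  set m : ℕ := (cA - z).toNat with hm
  have hm1 : cA - z ≤ (m : ℤ) := Int.self_le_toNat _
  have hm2 : (m : ℤ) ≤ qB * m := le_mul_of_one_le_left (by positivity) (by omega)
  have h1 : f ((z + pA) + qB * m) = f (z + pA) := perF_iter hQ (by omega) m _ (by omega)
  have h2 : f (z + qB * m) = f z := perF_iter hQ (by omega) m z hz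
  have h3 : f ((z + qB * m) + pA) = f (z + qB * m) := hP _ (by omega)
  rw [show (z + pA) + qB * (m : ℤ) = (z + qB * m) + pA by ring] at h1
  rw [h3, h2] at h1
  exact h1.symm

private lemma mirror_left {X : Type u} {f : ℤ → X} (hsym : SymMap f) {A q : ℤ}
    (h : ∀ z, z ≤ A → f (z + q) = f z) : PerF f (-A - q) q := by
  intro z hz
  have h1 : f ((-z - q) + q) = f (-z - q) := h _ (by omega)
  rw [show (-z - q) + q = -z by ring] at h1
  calc f (z + q) = f (-(z + q)) := hsym _
    _ = f (-z - q) := by rw [show -(z + q) = -z - q by ring]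
    _ = f (-z) := h1.symm
    _ = f z := (hsym z).symm

private lemma mirror_right {X : Type u} {f : ℤ → X} (hsym : SymMap f) {c q : ℤ}
    (h : PerF f c q) : ∀ z, z ≤ -c - q → f (z + q) = f z := by
  intro z hz
  have h1 : f ((-z - q) + q) = f (-z - q) := h _ (by omega)
  rw [show (-z - q) + q = -z by ring] at h1
  calc f (z + q) = f (-(z + q)) := hsym _
    _ = f (-z - q) := by rw [show -(z + q) = -z - q by ring]
    _ = f (-z) := h1.symm
    _ = f z := (hsym z).symm

private lemma global_of_small {X : Type u} {f : ℤ → X} (hsym : SymMap f) {c q : ℤ}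
    (hper : PerF f c q) (hsmall : q ≤ 1 - 2 * c) : ∀ z, f (z + q) = f z := by
  intro z
  rcases le_or_gt c z with hcz | hcz
  · exact hper z hcz
  · exact mirror_right hsym hper z (by omega)

/-! The folding null-homotopy for globally periodic symmetric maps -/

private lemma emod_succ_aux (p x : ℤ) (hp : 0 < p) :
    (x + 1) % p = if x % p + 1 < p then x % p + 1 else 0 := by
  have h0 : 0 ≤ x % p := Int.emod_nonneg x (by omega)
  have h1 : x % p < p := Int.emod_lt_of_pos x hp
  have key : (x + 1) % p = (x % p + 1) % p := by
    conv_lhs => rw [show x + 1 = (x % p + 1) + p * (x / p) from by rw [Int.emod_def]; ring]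
    rw [Int.add_mul_emod_self_left]
  rw [key]
  split_ifs with h
  · exact Int.emod_eq_of_lt (by omega) h
  · rw [show x % p + 1 = p from by omega, Int.emod_self]

private lemma phi_step_aux (p : ℤ) (hp : 0 < p) (x : ℤ) :
    -1 ≤ min ((x + 1) % p) (p - (x + 1) % p) - min (x % p) (p - x % p) ∧
      min ((x + 1) % p) (p - (x + 1) % p) - min (x % p) (p - x % p) ≤ 1 := by
  have h0 : 0 ≤ x % p := Int.emod_nonneg x (by omega)
  have h1 : x % p < p := Int.emod_lt_of_pos x hp
  rw [emod_succ_aux p x hp]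
  split_ifs with h
  · generalize x % p = r at h0 h1 h ⊢
    omega
  · generalize x % p = r at h0 h1 h ⊢
    omega

private lemma phi_lip_aux (p : ℤ) (hp : 0 < p) (x y : ℤ) (hl : -1 ≤ y - x) (hr : y - x ≤ 1) :
    -1 ≤ min (y % p) (p - y % p) - min (x % p) (p - x % p) ∧
      min (y % p) (p - y % p) - min (x % p) (p - x % p) ≤ 1 := by
  rcases (by omega : y = x ∨ y = x + 1 ∨ x = y + 1) with rfl | rfl | hxy
  · omega
  · exact phi_step_aux p hp x
  · have h2 := phi_step_aux p hp y
    rw [← hxy] at h2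
    omega

private lemma fold_eq_aux {X : Type u} {f : ℤ → X} (hsym : SymMap f) {p : ℤ} (hp : 0 < p)
    (hper : ∀ z, f (z + p) = f z) (x : ℤ) :
    f (min (x % p) (p - x % p)) = f x := by
  have hmul : ∀ (m : ℕ) (z : ℤ), f (z + p * m) = f z := by
    intro m
    induction m with
    | zero => intro z; norm_num
    | succ n ih =>
        intro z
        push_cast
        rw [show z + p * ((n : ℤ) + 1) = (z + p * n) + p by ring, hper, ih]
  have hmul' : ∀ (m z : ℤ), f (z + p * m) = f z := by
    intro m z
    rcases le_or_gt 0 m with hm | hm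
    · obtain ⟨n, rfl⟩ := Int.eq_ofNat_of_zero_le hm
      exact hmul n z
    · obtain ⟨n, hn⟩ := Int.eq_ofNat_of_zero_le (by omega : (0:ℤ) ≤ -m)
      have h2 := hmul n (z + p * m)
      rw [show (z + p * m) + p * (n : ℤ) = z from by rw [← hn]; ring] at h2
      exact h2.symm
  have hx : f (x % p) = f x := by
    rw [show x % p = x + p * (-(x / p)) from by rw [Int.emod_def]; ring, hmul']
  rcases le_total (x % p) (p - x % p) with h | h
  · rw [min_eq_left h, hx]
  · rw [min_eq_right h]
    have h1 : f (p - x % p) = f (x % p - p) := by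
      rw [hsym (p - x % p), show -(p - x % p) = x % p - p by ring]
    rw [h1, show x % p - p = (x % p) + p * (-1) by ring, hmul', hx]

private lemma null_fold {X : Type u} {V : Set (Set (X × X))} (hV : IsSemiCoarseStructure V)
    {f : ℤ → X} (hsym : SymMap f) (hbf : Bornologous Z1 V f) {p : ℤ} (hp : 0 < p)
    (hper : ∀ z, f (z + p) = f z) (s : Set ℤ) :
    HomotopicToConstOn V f s := by
  refine ⟨f 0,
    fun q => f (min (min (((q.1 : ℤ)) % p) (p - ((q.1 : ℤ)) % p)) (max 0 (min p (-q.2)))),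
    born_of_lip hV hbf _
      (fun x k => min (min (x % p) (p - x % p)) (max 0 (min p (-k)))) ?_,
    ⟨-p, ?_⟩, ⟨0, ?_⟩⟩
  · intro x x' k k' h1 h2 h3 h4
    have hφ := phi_lip_aux p hp x x' (by omega) (by omega)
    generalize min (x % p) (p - x % p) = A at hφ ⊢
    generalize min (x' % p) (p - x' % p) = A' at hφ ⊢
    omega
  · intro x k hk
    show f _ = f _
    have h0 : 0 ≤ ((x : ℤ)) % p := Int.emod_nonneg _ (by omega)
    have h1 : ((x : ℤ)) % p < p := Int.emod_lt_of_pos _ hp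
    have heq : min (min (((x : ℤ)) % p) (p - ((x : ℤ)) % p)) (max 0 (min p (-k)))
        = min (((x : ℤ)) % p) (p - ((x : ℤ)) % p) := by
      generalize ((x : ℤ)) % p = r at h0 h1 ⊢
      omega
    rw [heq]
    exact fold_eq_aux hsym hp hper _
  · intro x k hk
    show f _ = f 0
    have h0 : 0 ≤ ((x : ℤ)) % p := Int.emod_nonneg _ (by omega)
    have h1 : ((x : ℤ)) % p < p := Int.emod_lt_of_pos _ hp
    have heq : min (min (((x : ℤ)) % p) (p - ((x : ℤ)) % p)) (max 0 (min p (-k))) = 0 := by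
      generalize ((x : ℤ)) % p = r at h0 h1 ⊢
      omega
    rw [heq]

end Aux

private def TaF {X : Type u} (f : ℤ → X) (a : ℤ) : ℤ → X := fun z => f (min z a)
private def SaF {X : Type u} (f : ℤ → X) (a : ℤ) : ℤ → X := fun z => f (max z a)
private def WF {X : Type u} (f : ℤ → X) (a b : ℤ) : ℤ → X := fun z => f (max a (min z b))

/-! ### The main structural lemma: a good splitting point always exists -/

private lemma main_lemma {X : Type u} (V : Set (Set (X × X))) (hV : IsSemiCoarseStructure V)
    (f : ℤ → X) (hsym : SymMap f) (hb : Bornologous Z1 V f) :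
    TailCondAt V f 0 ∨
    (∃ a : ℤ, 1 ≤ a ∧ TailCondAt V f (-a) ∧ TailCondAt V (TaF f a) (-a)) ∨
    (∃ a : ℤ, 1 ≤ a ∧ TailCondAt V f a ∧ TailCondAt V (TaF f a) (-a)) := by
  classical
  by_cases hCI : ∃ c q : ℤ, 0 < q ∧ PerF f c q ∧ q ≤ 1 - 2 * c
  · -- Case I : f is globally periodic, fold null-homotopy applies everywhere
    obtain ⟨c, q, hq, hper, hsm⟩ := hCI
    have hg : ∀ z, f (z + q) = f z := global_of_small hsym hper hsm
    exact Or.inl ⟨fun _ => null_fold hV hsym hb hq hg _, fun _ => null_fold hV hsym hb hq hg _⟩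
  · by_cases hB : ∃ c q : ℤ, 0 < q ∧ PerF f c q
    · -- Case II.b : nonempty set of periodic tails, with a minimum
      obtain ⟨c₁, q₁, hq₁, hP₁⟩ := hB
      have hbdd : ∀ c : ℤ, (∃ q, 0 < q ∧ PerF f c q) → 1 - q₁ ≤ c := by
        rintro c ⟨q, hq, hPc⟩
        have hq₁c : PerF f c q₁ := perF_transport hq (le_of_lt hq₁) hP₁ hPc
        by_contra hlt
        exact hCI ⟨c, q₁, hq₁, hq₁c, by omega⟩
      obtain ⟨b, hbB, hbmin⟩ :=
        Int.exists_least_of_bdd (P := fun c => ∃ q, 0 < q ∧ PerF f c q)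
          ⟨1 - q₁, hbdd⟩ ⟨c₁, q₁, hq₁, hP₁⟩
      obtain ⟨qb, hqb, hPb⟩ := hbB
      -- the tail condition at b+1 holds vacuously for f
      have htcf : TailCondAt V f (b + 1) := by
        constructor
        · rintro ⟨_, k, hk, hpk⟩
          exfalso
          obtain ⟨q, hq, hper⟩ : ∃ q : ℤ, 0 < q ∧ ∀ z ∈ {z : ℤ | (b + 1) - k ≤ z},
              f (z + q) = f z := hpk
          have hP : PerF f (b - 1) q := fun z hz => hper z (by
            show (b + 1) - k ≤ z; omega)
          have := hbmin (b - 1) ⟨q, hq, hP⟩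
          omega
        · rintro ⟨hconj1, _⟩
          exfalso
          obtain ⟨q, hq, hper⟩ : ∃ q : ℤ, 0 < q ∧ ∀ z ∈ {z : ℤ | z ≤ (b + 1) + 1},
              f (z + q) = f z := hconj1
          have hmir : PerF f (-(b + 2) - q) q :=
            mirror_left hsym (A := b + 2) (fun z hz => hper z (by
              show z ≤ (b + 1) + 1; omega))
          have hmem := hbmin (-(b + 2) - q) ⟨q, hq, hmir⟩
          have hbp : PerF f b q := perF_transport hqb (le_of_lt hq) hmir hPb
          have h4 : ¬ (q ≤ 1 - 2 * b) := fun hple => hCI ⟨b, q, hq, hbp, hple⟩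
          omega
      rcases lt_trichotomy b (-1) with hblt | hbeq | hbgt
      · -- b ≤ -2 : use a := -b-1 ≥ 1, split point -a = b+1
        obtain ⟨a, ha1, ha2⟩ : ∃ a : ℤ, 1 ≤ a ∧ a = -b - 1 := ⟨-b - 1, by omega, rfl⟩
        refine Or.inr (Or.inl ⟨a, ha1, ?_, ?_⟩)
        · rw [show -a = b + 1 from by omega]
          exact htcf
        · constructor
          · intro _
            have hbT : Bornologous Z1 V (TaF f a) :=
              born_precomp hV hb (fun z => min z a) (by intro u v h1 h2; omega)
            exact null_right hV hbT a (-a) (by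
              intro z hz
              show f (min z a) = f (min a a)
              exact f_eq_aux hsym _ _ (by omega))
          · rintro ⟨hconj1, _⟩
            exfalso
            obtain ⟨q, hq, hperq⟩ : ∃ q : ℤ, 0 < q ∧ ∀ z ∈ {z : ℤ | z ≤ (-a) + 1},
                TaF f a (z + q) = TaF f a z := hconj1
            have hper : ∀ z, z ≤ 1 - a → f (min (z + q) a) = f (min z a) :=
              fun z hz => hperq z (by show z ≤ (-a) + 1; omega)
            rcases le_or_gt q (2 * a - 1) with hq2 | hq2
            · have hf : ∀ z, z ≤ 1 - a → f (z + q) = f z := by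
                intro z hz
                have h1 := hper z hz
                rwa [show min (z + q) a = z + q from by omega,
                  show min z a = z from by omega] at h1
              have hmir := mirror_left hsym (A := 1 - a) hf
              have hbp : PerF f b q := perF_transport hqb (le_of_lt hq) hmir hPb
              have h4 : ¬ (q ≤ 1 - 2 * b) := fun hple => hCI ⟨b, q, hq, hbp, hple⟩
              omega
            · have hconst : ∀ z, a - q ≤ z → z ≤ 1 - a → f z = f a := by
                intro z h1z h2z
                have h1 := hper z h2z
                rw [show min (z + q) a = a from by omega,
                  show min z a = z from by omega] at h1
                exact h1.symm
              have hlow : ∀ z, z ≤ a - q - 1 → f (z + q) = f z := by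
                intro z hz
                have h1 := hper z (by omega)
                rwa [show min (z + q) a = z + q from by omega,
                  show min z a = z from by omega] at h1
              have h1a : PerF f (1 - a) q := by
                have hmir := mirror_left hsym (A := a - q - 1) hlow
                rwa [show -(a - q - 1) - q = 1 - a by ring] at hmir
              have hbp : PerF f b q := perF_transport hqb (le_of_lt hq) h1a hPb
              have h4 : ¬ (q ≤ 1 - 2 * b) := fun hple => hCI ⟨b, q, hq, hbp, hple⟩
              have hnew : PerF f (b - 1) q := by
                intro z hz
                rcases le_or_gt (1 - a) z with hz1 | hz1
                · exact h1a z hz1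
                · have hc1 : f z = f a := hconst z (by omega) (by omega)
                  have hc2 : f (-(z + q)) = f a := hconst _ (by omega) (by omega)
                  calc f (z + q) = f (-(z + q)) := hsym _
                    _ = f a := hc2
                    _ = f z := hc1.symm
              have := hbmin (b - 1) ⟨q, hq, hnew⟩
              omega
      · -- b = -1 : split point 0
        have h0 : TailCondAt V f (b + 1) := htcf
        rw [show b + 1 = (0 : ℤ) from by omega] at h0
        exact Or.inl h0
      · -- b ≥ 0 : use a := b+1 ≥ 1, split point a
        obtain ⟨a, ha1, ha2⟩ : ∃ a : ℤ, 1 ≤ a ∧ a = b + 1 := ⟨b + 1, by omega, rfl⟩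
        refine Or.inr (Or.inr ⟨a, ha1, ?_, ?_⟩)
        · rw [show a = b + 1 from ha2]
          exact htcf
        · constructor
          · intro _
            have hbT : Bornologous Z1 V (TaF f a) :=
              born_precomp hV hb (fun z => min z a) (by intro u v h1 h2; omega)
            exact null_right hV hbT a (-a) (by
              intro z hz
              show f (min z a) = f (min a a)
              exact f_eq_aux hsym _ _ (by omega))
          · rintro ⟨hconj1, _⟩
            exfalso
            obtain ⟨q, hq, hperq⟩ : ∃ q : ℤ, 0 < q ∧ ∀ z ∈ {z : ℤ | z ≤ (-a) + 1},
                TaF f a (z + q) = TaF f a z := hconj1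
            have hper : ∀ z, z ≤ 1 - a → f (min (z + q) a) = f (min z a) :=
              fun z hz => hperq z (by show z ≤ (-a) + 1; omega)
            rcases le_or_gt q (2 * a - 1) with hq2 | hq2
            · have hf : ∀ z, z ≤ 1 - a → f (z + q) = f z := by
                intro z hz
                have h1 := hper z hz
                rwa [show min (z + q) a = z + q from by omega,
                  show min z a = z from by omega] at h1
              have hmir := mirror_left hsym (A := 1 - a) hf
              have hmir' : PerF f (b - q) q := by
                rwa [show -(1 - a) - q = b - q from by omega] at hmir
              have := hbmin (b - q) ⟨q, hq, hmir'⟩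
              omega
            · have hconst : ∀ z, a - q ≤ z → z ≤ 1 - a → f z = f a := by
                intro z h1z h2z
                have h1 := hper z h2z
                rw [show min (z + q) a = a from by omega,
                  show min z a = z from by omega] at h1
                exact h1.symm
              have hlow : ∀ z, z ≤ a - q - 1 → f (z + q) = f z := by
                intro z hz
                have h1 := hper z (by omega)
                rwa [show min (z + q) a = z + q from by omega,
                  show min z a = z from by omega] at h1
              have h1a : PerF f (-b) q := by
                have hmir := mirror_left hsym (A := a - q - 1) hlow
                rwa [show -(a - q - 1) - q = -b from by omega] at hmir
              rcases (by omega : 1 ≤ b ∨ b = 0) with hb1 | hb0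
              · have hnew : PerF f (b - 1) q := fun z hz => h1a z (by omega)
                have := hbmin (b - 1) ⟨q, hq, hnew⟩
                omega
              · subst hb0
                -- a = 1
                have hnew : PerF f (-1) q := by
                  intro z hz
                  rcases (by omega : 0 ≤ z ∨ z = -1) with h | hz1
                  · exact h1a z (by omega)
                  · subst hz1
                    calc f (-1 + q) = f (1 - q) := by
                          rw [hsym (-1 + q), show -(-1 + q) = 1 - q by ring]
                      _ = f a := hconst (1 - q) (by omega) (by omega)
                      _ = f 1 := congrArg f (by omega)
                      _ = f (-1) := hsym 1
                have := hbmin (-1) ⟨q, hq, hnew⟩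
                omega
    · -- Case II.a : no periodic tail at all, tail condition at 0 is vacuous
      left
      constructor
      · rintro ⟨hconj1, _⟩
        exfalso
        obtain ⟨q, hq, hper⟩ : ∃ q : ℤ, 0 < q ∧ ∀ z ∈ {z : ℤ | (0 : ℤ) - 1 ≤ z},
            f (z + q) = f z := hconj1
        exact hB ⟨-1, q, hq, fun z hz => hper z (by show (0 : ℤ) - 1 ≤ z; omega)⟩
      · rintro ⟨hconj1, _⟩
        exfalso
        obtain ⟨q, hq, hper⟩ : ∃ q : ℤ, 0 < q ∧ ∀ z ∈ {z : ℤ | z ≤ (0 : ℤ) + 1},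
            f (z + q) = f z := hconj1
        exact hB ⟨-1 - q, q,
          hq, mirror_left hsym (A := 1) (fun z hz => hper z (by show z ≤ (0 : ℤ) + 1; omega))⟩

/-! ### The route: removing a symmetric bornologous entry from a string -/

private lemma key_route {X : Type u} (V : Set (Set (X × X))) (hV : IsSemiCoarseStructure V)
    (f : ℤ → X) (hsym : SymMap f) (hb : Bornologous Z1 V f)
    (P Q : List (ℤ → X)) (hne : P ++ Q ≠ []) :
    SimS V (P ++ f :: Q) (P ++ Q) := by
  have hlen : 1 ≤ P.length + Q.length := by
    rcases hpq : P ++ Q with _ | ⟨x, l⟩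
    · exact absurd hpq hne
    · have := congrArg List.length hpq
      simp [List.length_append] at this
      omega
  -- generic split step : P ++ f :: Q  ⟶  P ++ T_c :: S_c :: Q
  have split_step : ∀ (c : ℤ), TailCondAt V f c →
      StepS V (P ++ f :: Q) (P ++ TaF f c :: SaF f c :: Q) := by
    intro c htc
    right; right; right
    refine ⟨P, Q, TaF f c, SaF f c, f, f c, c, c, c,
      rfl, rfl, le_refl c, le_refl c, ?_, ?_, ?_, htc⟩
    · intro x hx
      show f (min x c) = f c
      exact f_eq_aux hsym _ _ (by omega)
    · intro y hy
      show f (max y c) = f c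
      exact f_eq_aux hsym _ _ (by omega)
    · intro x
      by_cases hx : x ≤ c
      · rw [if_pos hx]
        show f x = f (min x c)
        exact f_eq_aux hsym _ _ (by omega)
      · rw [if_neg hx]
        show f x = f (max x c)
        exact f_eq_aux hsym _ _ (by omega)
  -- generic final deletion : P ++ T_d :: S_c :: Q ⟶ P ++ Q  (for d = -c)
  have del_step : ∀ (c d : ℤ), d = -c →
      StepS V (P ++ TaF f d :: SaF f c :: Q) (P ++ Q) := by
    intro c d hcd
    left
    refine ⟨P, Q, TaF f d, SaF f c, 0, rfl, rfl, ?_, ?_⟩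
    · simp [List.length_append]
      omega
    · intro z
      show f (min z d) = f (max (-(z + 0)) c)
      exact f_eq_aux hsym _ _ (by omega)
  -- the merge of (Tm, W) into Tp, resp. the splitting of Tp into (Tm, W)
  have merge_step : ∀ (a : ℤ), 1 ≤ a → TailCondAt V (TaF f a) (-a) →
      ∀ (P' S' : List (ℤ → X)),
      MergeRel V (P' ++ TaF f (-a) :: WF f (-a) a :: S') (P' ++ TaF f a :: S') := by
    intro a ha htT P' S'
    refine ⟨P', S', TaF f (-a), WF f (-a) a, TaF f a, f (-a), -a, -a, -a,
      rfl, rfl, le_refl _, le_refl _, ?_, ?_, ?_, htT⟩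
    · intro x hx
      show f (min x (-a)) = f (-a)
      exact f_eq_aux hsym _ _ (by omega)
    · intro y hy
      show f (max (-a) (min y a)) = f (-a)
      exact f_eq_aux hsym _ _ (by omega)
    · intro x
      by_cases hx : x ≤ -a
      · rw [if_pos hx]
        show f (min x a) = f (min x (-a))
        exact f_eq_aux hsym _ _ (by omega)
      · rw [if_neg hx]
        show f (min x a) = f (max (-a) (min x a))
        exact f_eq_aux hsym _ _ (by omega)
  -- splitting of W at 0 into (W1, W2)
  have splitW_step : ∀ (a : ℤ), 1 ≤ a → ∀ (P' S' : List (ℤ → X)),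
      MergeRel V (P' ++ WF f (-a) 0 :: WF f 0 a :: S') (P' ++ WF f (-a) a :: S') := by
    intro a ha P' S'
    have hbW : Bornologous Z1 V (WF f (-a) a) :=
      born_precomp hV hb (fun z => max (-a) (min z a)) (by intro u v h1 h2; omega)
    have htW : TailCondAt V (WF f (-a) a) 0 := by
      constructor
      · intro _
        exact null_right hV hbW a 0 (by
          intro z hz
          show f (max (-a) (min z a)) = f (max (-a) (min a a))
          exact f_eq_aux hsym _ _ (by omega))
      · intro _
        exact null_left hV hbW (-a) 0 (by
          intro z hz
          show f (max (-a) (min z a)) = f (max (-a) (min (-a) a))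
          exact f_eq_aux hsym _ _ (by omega))
    refine ⟨P', S', WF f (-a) 0, WF f 0 a, WF f (-a) a, f 0, 0, 0, 0,
      rfl, rfl, le_refl _, le_refl _, ?_, ?_, ?_, htW⟩
    · intro x hx
      show f (max (-a) (min x 0)) = f 0
      exact f_eq_aux hsym _ _ (by omega)
    · intro y hy
      show f (max 0 (min y a)) = f 0
      exact f_eq_aux hsym _ _ (by omega)
    · intro x
      by_cases hx : x ≤ 0
      · rw [if_pos hx]
        show f (max (-a) (min x a)) = f (max (-a) (min x 0))
        exact f_eq_aux hsym _ _ (by omega)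
      · rw [if_neg hx]
        show f (max (-a) (min x a)) = f (max 0 (min x a))
        exact f_eq_aux hsym _ _ (by omega)
  -- deletion of the mirror pair (W1, W2)
  have delW_step : ∀ (a : ℤ), 1 ≤ a → ∀ (P' S' : List (ℤ → X)),
      3 ≤ (P' ++ WF f (-a) 0 :: WF f 0 a :: S').length →
      DelOp (P' ++ WF f (-a) 0 :: WF f 0 a :: S') (P' ++ S') := by
    intro a ha P' S' hl
    refine ⟨P', S', WF f (-a) 0, WF f 0 a, 0, rfl, rfl, hl, ?_⟩
    intro z
    show f (max (-a) (min z 0)) = f (max 0 (min (-(z + 0)) a))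
    exact f_eq_aux hsym _ _ (by omega)
  obtain h0 | ⟨a, ha, htf, htT⟩ | ⟨a, ha, htf, htT⟩ := main_lemma V hV f hsym hb
  · -- split at 0 and delete
    exact Relation.ReflTransGen.head (split_step 0 h0)
      (Relation.ReflTransGen.single (del_step 0 0 (by norm_num)))
  · -- split point -a with a ≥ 1 : six moves
    refine Relation.ReflTransGen.head (split_step (-a) htf) ?_
    refine Relation.ReflTransGen.head
      (b := P ++ TaF f (-a) :: WF f (-a) a :: WF f (-a) a :: SaF f (-a) :: Q) ?_ ?_
    · -- insert the symmetric pair (W, W)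
      right; left
      refine ⟨P ++ [TaF f (-a)], SaF f (-a) :: Q, WF f (-a) a, WF f (-a) a, 0,
        by simp, by simp, ?_, ?_⟩
      · simp [List.length_append]
        omega
      · intro z
        show f (max (-a) (min z a)) = f (max (-a) (min (-(z + 0)) a))
        exact f_eq_aux hsym _ _ (by omega)
    refine Relation.ReflTransGen.head
      (b := P ++ TaF f a :: WF f (-a) a :: SaF f (-a) :: Q) ?_ ?_
    · -- merge (Tm, W) into Tp
      right; right; left
      exact merge_step a ha htT P (WF f (-a) a :: SaF f (-a) :: Q)
    refine Relation.ReflTransGen.head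
      (b := P ++ TaF f a :: WF f (-a) 0 :: WF f 0 a :: SaF f (-a) :: Q) ?_ ?_
    · -- split W at 0
      right; right; right
      have := splitW_step a ha (P ++ [TaF f a]) (SaF f (-a) :: Q)
      simpa using this
    refine Relation.ReflTransGen.head (b := P ++ TaF f a :: SaF f (-a) :: Q) ?_ ?_
    · -- delete the mirror pair (W1, W2)
      left
      have := delW_step a ha (P ++ [TaF f a]) (SaF f (-a) :: Q)
        (by simp [List.length_append]; omega)
      simpa using this
    exact Relation.ReflTransGen.single (del_step (-a) a (by ring))
  · -- split point a with a ≥ 1 : five moves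
    refine Relation.ReflTransGen.head (split_step a htf) ?_
    refine Relation.ReflTransGen.head
      (b := P ++ TaF f (-a) :: WF f (-a) a :: SaF f a :: Q) ?_ ?_
    · -- split Tp into (Tm, W)
      right; right; right
      exact merge_step a ha htT P (SaF f a :: Q)
    refine Relation.ReflTransGen.head
      (b := P ++ TaF f (-a) :: WF f (-a) 0 :: WF f 0 a :: SaF f a :: Q) ?_ ?_
    · -- split W at 0
      right; right; right
      have := splitW_step a ha (P ++ [TaF f (-a)]) (SaF f a :: Q)
      simpa using this
    refine Relation.ReflTransGen.head (b := P ++ TaF f (-a) :: SaF f a :: Q) ?_ ?_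
    · -- delete the mirror pair (W1, W2)
      left
      have := delW_step a ha (P ++ [TaF f (-a)]) (SaF f a :: Q)
        (by simp [List.length_append]; omega)
      simpa using this
    exact Relation.ReflTransGen.single (del_step a (-a) rfl)

/-- For an `n`-string `F` from `⟨f⟩_∞` to `⟨g⟩_∞`,
`⟨(f) ⋆ F⟩_S = ⟨F⟩_S = ⟨F ⋆ (g)⟩_S`, and the same holds with `f, g` replaced by any
`f' ∈ ⟨f⟩_∞`, `g' ∈ ⟨g⟩_∞`. -/
theorem simS_endpoint_identity {X : Type u}
    (V : Set (Set (X × X))) (hV : IsSemiCoarseStructure V)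
    (f g : ℤ → X) (F : List (ℤ → X)) (hF : IsString V f g F) :
    SimS V (f :: F) F ∧ SimS V (F ++ [g]) F ∧
    (∀ f' : ℤ → X, InfEqv V f f' → SimS V (f' :: F) F) ∧
    (∀ g' : ℤ → X, InfEqv V g g' → SimS V (F ++ [g']) F) := by
  obtain ⟨hne, hsymf, hsymg, hbf, hbg, hbu, hchain⟩ := hF
  have extract : ∀ {h h' : ℤ → X}, SymMap h → Bornologous Z1 V h → InfEqv V h h' →
      SymMap h' ∧ Bornologous Z1 V h' := by
    intro h h' hs hb heq
    induction heq with
    | refl => exact ⟨hs, hb⟩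
    | tail _ step ih =>
        rcases step with st | st
        · exact ⟨st.2.1, st.2.2.2.1⟩
        · exact ⟨st.1, st.2.2.1⟩
  refine ⟨?_, ?_, ?_, ?_⟩
  · exact key_route V hV f hsymf hbf [] F hne
  · have := key_route V hV g hsymg hbg F [] (by simpa using hne)
    simpa using this
  · intro f' hf'
    obtain ⟨hs', hb'⟩ := extract hsymf hbf hf'
    exact key_route V hV f' hs' hb' [] F hne
  · intro g' hg'
    obtain ⟨hs', hb'⟩ := extract hsymg hbg hg'
    have := key_route V hV g' hs' hb' F [] (by simpa using hne)
    simpa using this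
end

section
/- Let X be a semi-coarse space, f : ℤ₁ → X a bornologous map, and z₀ ∈ ℤ. Then the map f_{a(z₀)} : ℤ₁ → X defined by f_{a(z₀)}(z) = f(z) for z < z₀, f_{a(z₀)}(z₀) = f(z₀), and f_{a(z₀)}(z) = f(z−1) for z > z₀, is bornologous. -/
open Set

universe u v w

/-- The map `f_{a(z₀)}`, obtained by repeating the value of `f` at `z₀`, is
bornologous. -/
theorem trivial_adding_bornologous {X : Type u}
    (V : Set (Set (X × X))) (hV : IsSemiCoarseStructure V)
    (f : ℤ → X) (hf : Bornologous Z1 V f) (z₀ : ℤ) :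
    Bornologous Z1 V
      (fun z : ℤ => if z < z₀ then f z else if z = z₀ then f z₀ else f (z - 1)) := by
  set h : ℤ → ℤ := fun z => if z ≤ z₀ then z else z - 1 with hh
  have hg : ∀ z : ℤ, (if z < z₀ then f z else if z = z₀ then f z₀ else f (z - 1)) = f (h z) := by
    intro z
    simp only [hh]
    split_ifs with h1 h2 h3 h4 <;> first | rfl | (exfalso; omega) | (congr 1; omega)
  intro A hA
  have hE : ({p : ℤ × ℤ | |p.2 - p.1| ≤ 1} : Set (ℤ × ℤ)) ∈ Z1 := fun p hp => hp
  have hFE := hf _ hE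
  refine hV.2.1 _ _ hFE ?_
  rintro ⟨x, y⟩ ⟨⟨a, b⟩, hab, heq⟩
  refine ⟨(h a, h b), ?_, ?_⟩
  · have : |b - a| ≤ 1 := hA hab
    simp only [Set.mem_setOf_eq, abs_le, hh] at this ⊢
    split_ifs <;> omega
  · simp only [← heq, hg]
end

section
/- Let X be a semi-coarse space and F = (f₁,…,fₙ) a string in X. For any i, let f'ᵢ : ℤ₁ → X be the shifted map f'ᵢ(z) := fᵢ(z−1). Then [F] = [(f₁,…,f'ᵢ,…,fₙ)], i.e. F ≃ (f₁,…,f'ᵢ,…,fₙ). -/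
open Set

universe u v w

/-- Shifting one coordinate of a string by one yields a `≃`-equivalent
string. -/
theorem shift_coordinate_equiv {X : Type u}
    (V : Set (Set (X × X))) (hV : IsSemiCoarseStructure V)
    (f g : ℤ → X) (P S : List (ℤ → X)) (u : ℤ → X)
    (hF : IsString V f g (P ++ u :: S)) :
    SimFull V (P ++ u :: S) (P ++ (fun z : ℤ => u (z - 1)) :: S) := by
  set u' : ℤ → X := fun z : ℤ => u (z - 1) with hu'
  have h1 : StepFull V (P ++ u :: S) (P ++ u :: opp u :: u' :: S) := by
    left; right; left
    refine ⟨P ++ [u], S, opp u, u', -1, ?_, ?_, ?_, ?_⟩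
    · simp
    · simp
    · simp [List.length_append]; omega
    · intro z
      simp only [opp, hu']
      congr 1
      ring
  have h2 : StepFull V (P ++ u :: opp u :: u' :: S) (P ++ u' :: S) := by
    left; left
    refine ⟨P, u' :: S, u, opp u, 0, rfl, rfl, ?_, ?_⟩
    · simp [List.length_append]; omega
    · intro z
      simp [opp]
  exact (Relation.ReflTransGen.single h1).tail h2
end
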